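/- In the free associative ℚ-algebra, define Φ(t) = log σ(t) where σ(t) = 1 + ∑_{n≥1} S_n t^n and ψ(t) = σ(t)^{-1}σ'(t). Then ψ(t) = ∑_{n≥0} ((-1)^n/(n+1)!) (ad Φ(t))^n (Φ'(t)), i.e., ψ = {(1-e^{-Φ})/Φ, Φ'} where ad a (b) = ab - ba and the bracket expression denotes the formal series in ad Φ applied to Φ'. -/

import Mathlib

/-!
Put `F = σ - 1` and `Φ = log (1 + F)`. Substituting `F` into rational power series is a ring
homomorphism `ℚ⟦X⟧ → A⟦X⟧` compatible with composition, so identities in `ℚ⟦X⟧` transfer: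
`exp (log (1 + X)) = 1 + X` (both sides have logarithmic derivative `1 / (1 + X)`) gives
`σ = exp Φ`, and `exp X · exp (-X) = 1` gives `τ = exp (-Φ)`. Hence `τσ' = exp (-Φ) · (exp Φ)'`
with `(Φ^(k+1))' = ∑ Φ^i Φ' Φ^(k-i)`. The terms of this Cauchy product with `n` factors `Φ` are
combinations of the words `Φ^q Φ' Φ^(n-q)`, with coefficient
`∑_{p ≤ q} (-1)^p / (p! (n+1-p)!) = (-1)^q C(n,q) / (n+1)!`, which is also the coefficient of that
word in `(-1)^n / (n+1)! · (ad Φ)^n Φ'`.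
-/

open PowerSeries

variable {A : Type*} [Ring A] [Algebra ℚ A]

/-- Formal derivative of a power series (with possibly noncommutative
coefficients). -/
noncomputable def fDeriv (F : PowerSeries A) : PowerSeries A :=
  PowerSeries.mk fun n => ((n : ℚ) + 1) • coeff (n + 1) F

/-- Formal logarithm `log(1 + F)` for `F` with zero constant term. -/
noncomputable def fLog (F : PowerSeries A) : PowerSeries A :=
  PowerSeries.mk fun n =>
    ∑ k ∈ Finset.range (n + 1), ((-1 : ℚ) ^ (k + 1) / k) • coeff n (F ^ k)

/-- Iterated adjoint action `(ad Φ)ⁿ (G)`, where `(ad Φ)(G) = ΦG - GΦ`. -/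
noncomputable def adPow (Φ G : PowerSeries A) : ℕ → PowerSeries A
  | 0 => G
  | n + 1 => Φ * adPow Φ G n - adPow Φ G n * Φ

open Finset

section OrderedSum

variable {R : Type*} [Semiring R]

def IsOrdered (f : ℕ → R⟦X⟧) : Prop := ∀ k : ℕ, (k : ℕ∞) ≤ (f k).order

/-- `∑ₖ f k`; the degree-`m` coefficient only sees `k ≤ m`, which is the whole sum when
`f` is ordered. -/
noncomputable def orderedSum (f : ℕ → R⟦X⟧) : R⟦X⟧ :=
  mk fun m => ∑ k ∈ range (m + 1), coeff m (f k)

theorem coeff_orderedSum (f : ℕ → R⟦X⟧) (m : ℕ) :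
    coeff m (orderedSum f) = ∑ k ∈ range (m + 1), coeff m (f k) :=
  coeff_mk _ _

theorem IsOrdered.coeff_eq_zero {f : ℕ → R⟦X⟧} (hf : IsOrdered f) {m k : ℕ} (h : m < k) :
    coeff m (f k) = 0 :=
  coeff_of_lt_order m ((Nat.cast_lt.2 h).trans_le (hf k))

theorem IsOrdered.coeff_orderedSum {f : ℕ → R⟦X⟧} (hf : IsOrdered f) {m N : ℕ} (h : m < N) :
    coeff m (orderedSum f) = ∑ k ∈ range N, coeff m (f k) := by
  rw [_root_.coeff_orderedSum]
  refine sum_subset (range_subset_range.2 h) fun k hkN hk => hf.coeff_eq_zero ?_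
  simpa using hk

theorem IsOrdered.smul {S : Type*} [Semiring S] [Module S R] {f : ℕ → R⟦X⟧} (hf : IsOrdered f)
    (c : ℕ → S) : IsOrdered fun k => c k • f k :=
  fun k => le_order _ _ fun i hi => by
    rw [coeff_smul, coeff_of_lt_order i (hi.trans_le (hf k)), smul_zero]

theorem isOrdered_pow {F : R⟦X⟧} (hF : constantCoeff F = 0) : IsOrdered (F ^ ·) :=
  fun k => le_order_pow_of_constantCoeff_eq_zero k hF

theorem orderedSum_mul_orderedSum {f g : ℕ → R⟦X⟧} (hf : IsOrdered f) (hg : IsOrdered g) :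
    orderedSum f * orderedSum g =
      orderedSum fun n => ∑ p ∈ range (n + 1), f p * g (n - p) := by
  ext m
  have hsquare : coeff m (orderedSum f * orderedSum g) =
      ∑ k ∈ range (m + 1), ∑ l ∈ range (m + 1), coeff m (f k * g l) := by
    rw [coeff_mul]
    have : ∀ ij ∈ antidiagonal m, coeff ij.1 (orderedSum f) * coeff ij.2 (orderedSum g) =
        ∑ k ∈ range (m + 1), ∑ l ∈ range (m + 1), coeff ij.1 (f k) * coeff ij.2 (g l) := by
      intro ij hij
      rw [HasAntidiagonal.mem_antidiagonal] at hij
      rw [hf.coeff_orderedSum (N := m + 1) (by omega), hg.coeff_orderedSum (N := m + 1) (by omega),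
        sum_mul_sum]
    simp only [sum_congr rfl this, coeff_mul]
    rw [sum_comm]
    exact sum_congr rfl fun k _ => sum_comm
  have htriangle : coeff m (orderedSum fun n => ∑ p ∈ range (n + 1), f p * g (n - p)) =
      ∑ k ∈ range (m + 1), ∑ l ∈ range (m + 1 - k), coeff m (f k * g l) := by
    simp only [coeff_orderedSum, map_sum]
    exact sum_range_diag_flip (m + 1) fun k l => coeff m (f k * g l)
  rw [hsquare, htriangle]
  refine sum_congr rfl fun k hk => (sum_subset (range_subset_range.2 (by omega)) ?_).symm
  intro l _ hl
  simp only [mem_range, not_lt] at hk hl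
  refine coeff_of_lt_order m ?_
  calc (m : ℕ∞) < k + l := by exact_mod_cast (show m < k + l by omega)
    _ ≤ (f k).order + (g l).order := add_le_add (hf k) (hg l)
    _ ≤ (f k * g l).order := le_order_mul _ _

end OrderedSum

theorem coeff_fDeriv (F : A⟦X⟧) (n : ℕ) : coeff n (fDeriv F) = ((n : ℚ) + 1) • coeff (n + 1) F :=
  coeff_mk _ _

theorem fDeriv_smul (c : ℚ) (F : A⟦X⟧) : fDeriv (c • F) = c • fDeriv F := by
  ext n
  simp only [coeff_fDeriv, coeff_smul, smul_comm c]

theorem fDeriv_one : fDeriv (1 : A⟦X⟧) = 0 := by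
  ext n
  simp [coeff_fDeriv, coeff_one]

theorem fDeriv_mul (F G : A⟦X⟧) : fDeriv (F * G) = fDeriv F * G + F * fDeriv G := by
  ext n
  have hweight : ((n : ℚ) + 1) • coeff (n + 1) (F * G) =
      ∑ p ∈ antidiagonal (n + 1), (p.1 : ℚ) • (coeff p.1 F * coeff p.2 G) +
        ∑ p ∈ antidiagonal (n + 1), (p.2 : ℚ) • (coeff p.1 F * coeff p.2 G) := by
    rw [coeff_mul, ← sum_add_distrib, smul_sum]
    refine sum_congr rfl fun p hp => ?_
    rw [HasAntidiagonal.mem_antidiagonal] at hp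
    rw [← add_smul]
    congr 1
    exact_mod_cast (by omega : n + 1 = p.1 + p.2)
  rw [coeff_fDeriv, hweight, Nat.sum_antidiagonal_succ, Nat.sum_antidiagonal_succ', map_add,
    coeff_mul, coeff_mul]
  simp [coeff_fDeriv]

theorem fDeriv_pow_succ (F : A⟦X⟧) (k : ℕ) :
    fDeriv (F ^ (k + 1)) = ∑ i ∈ range (k + 1), F ^ i * fDeriv F * F ^ (k - i) := by
  induction k with
  | zero => simp
  | succ k ih =>
    rw [pow_succ', fDeriv_mul, ih, mul_sum, sum_range_succ' _ (k + 1)]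
    simp only [pow_zero, one_mul, Nat.sub_zero, ← mul_assoc, ← pow_succ']
    rw [add_comm]
    congr 1
    refine sum_congr rfl fun i hi => ?_
    rw [Nat.add_sub_add_right]

theorem fDeriv_orderedSum (f : ℕ → A⟦X⟧) :
    fDeriv (orderedSum f) = fDeriv (f 0) + orderedSum fun k => fDeriv (f (k + 1)) := by
  ext m
  simp only [map_add, coeff_fDeriv, coeff_orderedSum, sum_range_succ' _ (m + 1), smul_add,
    smul_sum]
  rw [add_comm]

theorem IsOrdered.fDeriv_succ {f : ℕ → A⟦X⟧} (hf : IsOrdered f) :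
    IsOrdered fun k => fDeriv (f (k + 1)) :=
  fun k => le_order _ _ fun i hi => by
    rw [coeff_fDeriv, hf.coeff_eq_zero (Nat.succ_lt_succ (by exact_mod_cast hi)), smul_zero]

/-- `φ(F)` for a rational power series `φ`, meaningful when `constantCoeff F = 0`; Mathlib's
`PowerSeries.subst` needs commutative coefficients. -/
noncomputable def ratSubst (F : A⟦X⟧) (φ : ℚ⟦X⟧) : A⟦X⟧ :=
  orderedSum fun k => coeff k φ • F ^ k

theorem coeff_ratSubst (F : A⟦X⟧) (φ : ℚ⟦X⟧) (m : ℕ) :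
    coeff m (ratSubst F φ) = ∑ k ∈ range (m + 1), coeff k φ • coeff m (F ^ k) := by
  simp only [ratSubst, coeff_orderedSum, coeff_smul]

theorem constantCoeff_ratSubst (F : A⟦X⟧) (φ : ℚ⟦X⟧) :
    constantCoeff (ratSubst F φ) = constantCoeff φ • 1 := by
  rw [← coeff_zero_eq_constantCoeff_apply, ← coeff_zero_eq_constantCoeff_apply, coeff_ratSubst]
  simp

theorem ratSubst_one (F : A⟦X⟧) : ratSubst F 1 = 1 := by
  ext m
  rw [coeff_ratSubst, sum_eq_single_of_mem 0 (by simp)]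
  · simp
  · intro k _ hk
    rw [coeff_one, if_neg hk, zero_smul]

theorem ratSubst_X {F : A⟦X⟧} (hF : constantCoeff F = 0) : ratSubst F X = F := by
  ext m
  rw [coeff_ratSubst]
  rcases m with _ | m
  · simp [hF]
  · rw [sum_eq_single_of_mem 1 (by simp)]
    · simp
    · intro k _ hk
      rw [coeff_X, if_neg hk, zero_smul]

theorem ratSubst_add (F : A⟦X⟧) (φ ψ : ℚ⟦X⟧) :
    ratSubst F (φ + ψ) = ratSubst F φ + ratSubst F ψ := by
  ext m
  simp only [coeff_ratSubst, map_add, add_smul, sum_add_distrib]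

theorem ratSubst_mul {F : A⟦X⟧} (hF : constantCoeff F = 0) (φ ψ : ℚ⟦X⟧) :
    ratSubst F (φ * ψ) = ratSubst F φ * ratSubst F ψ := by
  have hord : ∀ χ : ℚ⟦X⟧, IsOrdered fun k => coeff k χ • F ^ k :=
    fun χ => (isOrdered_pow hF).smul _
  rw [ratSubst, ratSubst, ratSubst, orderedSum_mul_orderedSum (hord φ) (hord ψ)]
  congr 1
  funext n
  rw [coeff_mul, Nat.sum_antidiagonal_eq_sum_range_succ_mk, sum_smul]
  refine sum_congr rfl fun p hp => ?_
  rw [smul_mul_smul_comm, ← pow_add, Nat.add_sub_cancel' (by simpa [Nat.lt_succ_iff] using hp)]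

noncomputable def ratSubstHom {F : A⟦X⟧} (hF : constantCoeff F = 0) : ℚ⟦X⟧ →+* A⟦X⟧ where
  toFun := ratSubst F
  map_one' := ratSubst_one F
  map_mul' := ratSubst_mul hF
  map_zero' := by ext; simp [coeff_ratSubst]
  map_add' := ratSubst_add F

theorem ratSubst_orderedSum (F : A⟦X⟧) {f : ℕ → ℚ⟦X⟧} (hf : IsOrdered f) :
    ratSubst F (orderedSum f) = orderedSum fun k => ratSubst F (f k) := by
  ext m
  have : ∀ k ∈ range (m + 1), coeff k (orderedSum f) • coeff m (F ^ k) =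
      ∑ l ∈ range (m + 1), coeff k (f l) • coeff m (F ^ k) := by
    intro k hk
    rw [hf.coeff_orderedSum (N := m + 1) (by simpa using hk), sum_smul]
  rw [coeff_ratSubst, sum_congr rfl this, sum_comm, coeff_orderedSum]
  exact sum_congr rfl fun l _ => (coeff_ratSubst F (f l) m).symm

theorem ratSubst_ratSubst {F : A⟦X⟧} (hF : constantCoeff F = 0) {ψ : ℚ⟦X⟧}
    (hψ : constantCoeff ψ = 0) (φ : ℚ⟦X⟧) :
    ratSubst F (ratSubst ψ φ) = ratSubst (ratSubst F ψ) φ := by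
  rw [ratSubst.eq_1 ψ, ratSubst_orderedSum F ((isOrdered_pow hψ).smul _),
    ratSubst.eq_1 (ratSubst F ψ)]
  congr 1
  funext k
  exact (map_rat_smul (ratSubstHom hF) _ _).trans (congrArg _ (map_pow (ratSubstHom hF) ψ k))

theorem ratSubst_rescale (F : A⟦X⟧) (c : ℚ) (φ : ℚ⟦X⟧) :
    ratSubst F (rescale c φ) = ratSubst (c • F) φ := by
  ext m
  simp only [coeff_ratSubst, coeff_rescale, smul_pow, coeff_smul, mul_smul]
  exact sum_congr rfl fun k _ => smul_comm _ _ _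

theorem ratSubst_eq_subst {B : Type*} [CommRing B] [Algebra ℚ B] {F : B⟦X⟧}
    (hF : constantCoeff F = 0) (φ : ℚ⟦X⟧) : ratSubst F φ = φ.subst F := by
  ext m
  rw [coeff_ratSubst, coeff_subst' (HasSubst.of_constantCoeff_zero' hF)]
  refine (finsum_eq_sum_of_support_subset _ fun k hk => ?_).symm
  by_contra hkm
  simp only [coe_range, Set.mem_Iio, not_lt] at hkm
  exact hk (by dsimp only; rw [(isOrdered_pow hF).coeff_eq_zero (by omega), smul_zero])

theorem ratSubst_log_exp : ratSubst (log ℚ) (exp ℚ) = 1 + X := by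
  set E := ratSubst (log ℚ) (exp ℚ) with hEdef
  have hunit : constantCoeff (1 + X : ℚ⟦X⟧) ≠ 0 := by simp
  have hgeom : d⁄dX ℚ (log ℚ) = (1 + X)⁻¹ := by
    rw [deriv_log, eq_inv_iff_mul_eq_one hunit]
    ext n
    rcases n with _ | n
    · simp
    · simp [mul_add, coeff_succ_mul_X, pow_succ]
  have hE : d⁄dX ℚ E = E * (1 + X)⁻¹ := by
    rw [hEdef, ratSubst_eq_subst constantCoeff_log, derivative_subst HasSubst.log,
      derivative_exp, hgeom]
  have hconst : 1 = E * (1 + X)⁻¹ := by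
    refine derivative.ext ?_ ?_
    · rw [Derivation.leibniz, derivative_inv', hE]
      simp only [Derivation.map_one_eq_zero, map_add, derivative_X, zero_add, mul_one,
        smul_eq_mul, mul_neg]
      ring
    · simp [E, constantCoeff_ratSubst]
  simpa using ((eq_mul_inv_iff_mul_eq hunit).1 hconst).symm

theorem fLog_eq_ratSubst (F : A⟦X⟧) : fLog F = ratSubst F (log ℚ) := by
  ext m
  rw [fLog, coeff_mk, coeff_ratSubst]
  refine sum_congr rfl fun k _ => ?_
  rcases k with _ | k <;> simp

theorem ratSubst_fLog_exp {F : A⟦X⟧} (hF : constantCoeff F = 0) :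
    ratSubst (fLog F) (exp ℚ) = 1 + F := by
  rw [fLog_eq_ratSubst, ← ratSubst_ratSubst hF constantCoeff_log, ratSubst_log_exp,
    ratSubst_add, ratSubst_one, ratSubst_X hF]

theorem ratSubst_exp_mul_ratSubst_neg_exp {Φ : A⟦X⟧} (hΦ : constantCoeff Φ = 0) :
    ratSubst Φ (exp ℚ) * ratSubst (-Φ) (exp ℚ) = 1 := by
  rw [← neg_one_smul ℚ Φ, ← ratSubst_rescale]
  exact (map_mul (ratSubstHom hΦ) _ _).symm.trans
    ((congrArg _ (exp_mul_exp_neg_eq_one (A := ℚ))).trans (map_one _))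

theorem fDeriv_ratSubst (F : A⟦X⟧) (φ : ℚ⟦X⟧) :
    fDeriv (ratSubst F φ) = orderedSum fun k => coeff (k + 1) φ • fDeriv (F ^ (k + 1)) := by
  rw [ratSubst, fDeriv_orderedSum, pow_zero, fDeriv_smul, fDeriv_one, smul_zero, zero_add]
  simp only [fDeriv_smul]

theorem sum_range_neg_one_pow_div_factorial_mul_factorial {n q : ℕ} (hq : q ≤ n) :
    ∑ p ∈ range (q + 1), (-1 : ℚ) ^ p / (p.factorial * (n + 1 - p).factorial) =
      (-1) ^ q * n.choose q / (n + 1).factorial := by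
  have hchoose : ∀ p ∈ range (q + 1), (-1 : ℚ) ^ p / (p.factorial * (n + 1 - p).factorial) =
      (-1) ^ p * (n + 1).choose p / (n + 1).factorial := by
    intro p hp
    have hpn : p ≤ n + 1 := by simp at hp; omega
    rw [Nat.cast_choose ℚ hpn]
    field_simp
  rw [sum_congr rfl hchoose, ← sum_div]
  exact_mod_cast congrArg (fun z : ℤ => (z : ℚ) / (n + 1).factorial)
    Int.alternating_sum_range_choose_eq_choose

section Adjoint

attribute [local instance] LieRing.ofAssociativeRing

open LieAlgebra

theorem ad_pow_apply_eq_sum {K R : Type*} [CommRing K] [Ring R] [Algebra K R] (x y : R) (n : ℕ) :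
    (ad K R x ^ n) y =
      ∑ p ∈ range (n + 1), ((-1 : ℤ) ^ (n - p) * n.choose p) • (x ^ p * y * x ^ (n - p)) := by
  have hc : Commute (LinearMap.mulLeft K x) (-LinearMap.mulRight K x) :=
    (LinearMap.commute_mulLeft_right (R := K) x x).neg_right
  rw [ad_eq_lmul_left_sub_lmul_right, Pi.sub_apply, sub_eq_add_neg, hc.add_pow,
    LinearMap.sum_apply]
  refine sum_congr rfl fun p _ => ?_
  have hsign : (-1 : Module.End K R) ^ (n - p) = (((-1 : ℤ) ^ (n - p) : ℤ) : Module.End K R) := by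
    push_cast; rfl
  rw [neg_pow, hsign, LinearMap.pow_mulRight, LinearMap.pow_mulLeft, Module.End.mul_apply,
    Module.End.mul_apply, Module.End.mul_apply, Module.End.intCast_apply,
    Module.End.natCast_apply]
  simp only [LinearMap.mulLeft_apply, LinearMap.mulRight_apply, mul_smul, smul_mul_assoc,
    mul_smul_comm, natCast_zsmul, mul_assoc]

theorem adPow_eq_ad_pow (Φ G : A⟦X⟧) (n : ℕ) : adPow Φ G n = (ad ℚ A⟦X⟧ Φ ^ n) G := by
  induction n with
  | zero => rfl
  | succ n ih => rw [adPow, ih, pow_succ', Module.End.mul_apply, ad_apply, Ring.lie_def]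

theorem smul_ad_pow_apply_eq_sum {R : Type*} [Ring R] [Algebra ℚ R] (x y : R) (n : ℕ) :
    ((-1) ^ n / (n + 1).factorial : ℚ) • (ad ℚ R x ^ n) y =
      ∑ q ∈ range (n + 1),
        ((-1) ^ q * n.choose q / (n + 1).factorial : ℚ) • (x ^ q * y * x ^ (n - q)) := by
  rw [ad_pow_apply_eq_sum, smul_sum]
  refine sum_congr rfl fun q hq => ?_
  obtain ⟨d, rfl⟩ : ∃ d, n = q + d := ⟨n - q, by simp at hq; omega⟩
  have hsq : ((-1 : ℚ) ^ d) ^ 2 = 1 := by rw [← pow_mul, pow_mul']; simp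
  rw [← Int.cast_smul_eq_zsmul ℚ, smul_smul, Nat.add_sub_cancel_left]
  congr 1
  push_cast
  linear_combination (-1 : ℚ) ^ q * ((q + d).choose q) / (q + d + 1).factorial * hsq

/-- The degree-`n` part of `exp(-x) · d(exp x)` when `x` is differentiated in direction `y`. -/
theorem sum_inv_factorial_neg_pow_mul_eq_smul_ad_pow {R : Type*} [Ring R] [Algebra ℚ R]
    (x y : R) (n : ℕ) :
    ∑ p ∈ range (n + 1), ((p.factorial : ℚ)⁻¹ • (-x) ^ p) *
        (((n - p + 1).factorial : ℚ)⁻¹ • ∑ i ∈ range (n - p + 1), x ^ i * y * x ^ (n - p - i)) =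
      ((-1) ^ n / (n + 1).factorial : ℚ) • (ad ℚ R x ^ n) y := by
  set c : ℕ → ℚ := fun p => (-1 : ℚ) ^ p / (p.factorial * (n + 1 - p).factorial)
  have hexpand : ∀ p ∈ range (n + 1), ((p.factorial : ℚ)⁻¹ • (-x) ^ p) *
      (((n - p + 1).factorial : ℚ)⁻¹ • ∑ i ∈ range (n - p + 1), x ^ i * y * x ^ (n - p - i)) =
      ∑ i ∈ range (n + 1 - p), c p • (x ^ (p + i) * y * x ^ (n - (p + i))) := by
    intro p hp
    have hpn : p ≤ n := by simpa [Nat.lt_succ_iff] using hp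
    rw [← neg_one_smul ℚ x, smul_pow, smul_smul, smul_mul_smul_comm, mul_sum, smul_sum,
      Nat.sub_add_comm hpn]
    refine sum_congr rfl fun i _ => ?_
    rw [← mul_assoc, ← mul_assoc, ← pow_add, Nat.sub_sub]
    congr 1
    simp only [c]
    field_simp
    rw [Nat.sub_add_comm hpn]
  have hregroup : ∀ q ∈ range (n + 1),
      ∑ p ∈ range (q + 1), c p • (x ^ (p + (q - p)) * y * x ^ (n - (p + (q - p)))) =
        ((-1) ^ q * n.choose q / (n + 1).factorial : ℚ) • (x ^ q * y * x ^ (n - q)) := by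
    intro q hq
    have hterm : ∀ p ∈ range (q + 1),
        c p • (x ^ (p + (q - p)) * y * x ^ (n - (p + (q - p)))) =
          c p • (x ^ q * y * x ^ (n - q)) := by
      intro p hp
      rw [Nat.add_sub_cancel' (by simpa [Nat.lt_succ_iff] using hp)]
    rw [sum_congr rfl hterm, ← sum_smul,
      sum_range_neg_one_pow_div_factorial_mul_factorial (by simpa [Nat.lt_succ_iff] using hq)]
  rw [sum_congr rfl hexpand,
    ← sum_range_diag_flip (n + 1) fun p i => c p • (x ^ (p + i) * y * x ^ (n - (p + i))),
    sum_congr rfl hregroup, smul_ad_pow_apply_eq_sum]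

theorem ratSubst_neg_exp_mul_fDeriv_ratSubst_exp {Φ : A⟦X⟧} (hΦ : constantCoeff Φ = 0) :
    ratSubst (-Φ) (exp ℚ) * fDeriv (ratSubst Φ (exp ℚ)) =
      orderedSum fun n => ((-1) ^ n / (n + 1).factorial : ℚ) • adPow Φ (fDeriv Φ) n := by
  have hneg : constantCoeff (-Φ) = 0 := by rw [map_neg, hΦ, neg_zero]
  rw [fDeriv_ratSubst, ratSubst, orderedSum_mul_orderedSum ((isOrdered_pow hneg).smul _)
    ((isOrdered_pow hΦ).fDeriv_succ.smul _)]
  congr 1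
  funext n
  simp only [coeff_exp, Algebra.algebraMap_self, RingHom.id_apply, one_div, fDeriv_pow_succ,
    adPow_eq_ad_pow]
  exact sum_inv_factorial_neg_pow_mul_eq_smul_ad_pow Φ (fDeriv Φ) n

end Adjoint

theorem magnus_derivative_formula_general (σ τ : PowerSeries A)
    (hσ : constantCoeff σ = 1) (hτσ : τ * σ = 1) :
    letI Φ := fLog (σ - 1)
    τ * fDeriv σ =
      PowerSeries.mk (fun m =>
        ∑ n ∈ Finset.range (m + 1),
          ((-1 : ℚ) ^ n / (n + 1).factorial) • coeff m (adPow Φ (fDeriv Φ) n)) := by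
  set Φ := fLog (σ - 1)
  have hF : constantCoeff (σ - 1) = 0 := by rw [map_sub, hσ, map_one, sub_self]
  have hΦ : constantCoeff Φ = 0 := by
    simp only [Φ, fLog_eq_ratSubst, constantCoeff_ratSubst, constantCoeff_log, zero_smul]
  have hσ_exp : ratSubst Φ (exp ℚ) = σ := by
    rw [ratSubst_fLog_exp hF, add_sub_cancel]
  have hτ_exp : ratSubst (-Φ) (exp ℚ) = τ := calc
    ratSubst (-Φ) (exp ℚ) = τ * σ * ratSubst (-Φ) (exp ℚ) := by rw [hτσ, one_mul]
    _ = τ := by rw [mul_assoc, ← hσ_exp, ratSubst_exp_mul_ratSubst_neg_exp hΦ, mul_one]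
  rw [← hτ_exp, ← hσ_exp, ratSubst_neg_exp_mul_fDeriv_ratSubst_exp hΦ]
  ext m
  simp only [coeff_orderedSum, coeff_mk, coeff_smul]

/-- The derivative formula underlying the Magnus expansion. Let `σ(t)` be a
formal power series with constant term `1` and coefficients in a (possibly
noncommutative) ℚ-algebra, `τ = σ⁻¹`, `Φ = log σ`, and `ψ = σ⁻¹σ'`. Then
`ψ(t) = ∑_{n≥0} ((-1)ⁿ/(n+1)!) (ad Φ(t))ⁿ (Φ'(t))`, i.e.
`ψ = {(1-e^{-Φ})/Φ , Φ'}` (the series converges coefficientwise since `Φ` has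
zero constant term, `(ad Φ)ⁿ(Φ')` having no terms of degree `< n`). -/
theorem magnus_derivative_formula (σ τ : PowerSeries A)
    (hσ : constantCoeff σ = 1) (hτσ : τ * σ = 1) (hστ : σ * τ = 1) :
    letI Φ := fLog (σ - 1)
    τ * fDeriv σ =
      PowerSeries.mk (fun m =>
        ∑ n ∈ Finset.range (m + 1),
          ((-1 : ℚ) ^ n / (n + 1).factorial) • coeff m (adPow Φ (fDeriv Φ) n)) :=
  magnus_derivative_formula_general σ τ hσ hτσ
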